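/- Let z₁,…,zₙ (n ≥ 1) be points on the unit circle and P(z) = ∏ᵢ (z − zᵢ). For any real θ, the set {z : |z| = 1, z ∉ {z₁,…,zₙ}, Im(e^{−iθ}P(z)) = 0} has at most n elements. -/

import Mathlib

/-! For `|w| = |zᵢ| = 1` one has `conj (w - zᵢ) = -(w - zᵢ) / (w zᵢ)`, so on the unit circle
`conj P(w) = (-1)ⁿ P(w) / (wⁿ ∏ zᵢ)`. If `e^{-iθ} P(w)` is real and `P(w) ≠ 0`, equating it with its
conjugate and cancelling `P(w)` gives `wⁿ = (-1)ⁿ e^{iθ} / (e^{-iθ} ∏ zᵢ)`: every such `w` is an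
`n`-th root of one fixed number, and there are at most `n` of those. -/

open ComplexConjugate Finset Polynomial

theorem Set.finite_and_ncard_le_of_forall_pow_eq {R : Type*} [CommRing R] [IsDomain R] {n : ℕ}
    (hn : 0 < n) (a : R) {s : Set R} (hs : ∀ w ∈ s, w ^ n = a) :
    s.Finite ∧ s.ncard ≤ n := by
  classical
  have hsub : s ⊆ nthRootsFinset n a := fun w hw => (mem_nthRootsFinset hn a).2 (hs w hw)
  refine ⟨(nthRootsFinset n a).finite_toSet.subset hsub, ?_⟩
  calc s.ncard ≤ (nthRootsFinset n a : Set R).ncard :=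
        Set.ncard_le_ncard hsub (nthRootsFinset n a).finite_toSet
    _ = (nthRoots n a).toFinset.card := by rw [Set.ncard_coe_finset, nthRootsFinset_def]
    _ ≤ Multiset.card (nthRoots n a) := Multiset.toFinset_card_le _
    _ ≤ n := card_nthRoots n a

namespace Complex

theorem conj_sub_of_norm_eq_one {w z : ℂ} (hw : ‖w‖ = 1) (hz : ‖z‖ = 1) :
    conj (w - z) = -(w - z) / (w * z) := by
  have hw0 : w ≠ 0 := by rintro rfl; simp at hw
  have hz0 : z ≠ 0 := by rintro rfl; simp at hz
  rw [map_sub, ← inv_eq_conj hw, ← inv_eq_conj hz]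
  field_simp
  ring

theorem conj_prod_sub_of_norm_eq_one {ι : Type*} [Fintype ι] {w : ℂ} {z : ι → ℂ}
    (hw : ‖w‖ = 1) (hz : ∀ i, ‖z i‖ = 1) :
    conj (∏ i, (w - z i)) =
      (-1) ^ Fintype.card ι * (∏ i, (w - z i)) / (w ^ Fintype.card ι * ∏ i, z i) := by
  simp only [map_prod, conj_sub_of_norm_eq_one hw (hz _), prod_div_distrib, prod_neg,
    prod_mul_distrib, prod_const, card_univ]

theorem pow_card_eq_of_im_mul_prod_sub_eq_zero {ι : Type*} [Fintype ι] {w c : ℂ} {z : ι → ℂ}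
    (hw : ‖w‖ = 1) (hz : ∀ i, ‖z i‖ = 1) (hc : c ≠ 0) (hP : ∏ i, (w - z i) ≠ 0)
    (him : (c * ∏ i, (w - z i)).im = 0) :
    w ^ Fintype.card ι = (-1) ^ Fintype.card ι * conj c / (c * ∏ i, z i) := by
  have hw0 : w ≠ 0 := by rintro rfl; simp at hw
  have hQ : ∏ i, z i ≠ 0 := prod_ne_zero_iff.2 fun i _ h => by simpa [h] using hz i
  have hreal := conj_eq_iff_im.2 him
  rw [map_mul, conj_prod_sub_of_norm_eq_one hw hz] at hreal
  field_simp at hreal ⊢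
  linear_combination -hreal

end Complex

theorem curve_inter_circle_card (n : ℕ) (hn : 1 ≤ n) (z : Fin n → ℂ)
    (hz : ∀ i, ‖z i‖ = 1) (θ : ℝ) :
    {w : ℂ | ‖w‖ = 1 ∧ w ∉ Set.range z ∧
        (Complex.exp (-θ * Complex.I) * ∏ i, (w - z i)).im = 0}.Finite ∧
    {w : ℂ | ‖w‖ = 1 ∧ w ∉ Set.range z ∧
        (Complex.exp (-θ * Complex.I) * ∏ i, (w - z i)).im = 0}.ncard ≤ n := by
  refine Set.finite_and_ncard_le_of_forall_pow_eq hn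
    ((-1) ^ n * conj (Complex.exp (-θ * Complex.I)) / (Complex.exp (-θ * Complex.I) * ∏ i, z i))
    fun w ⟨hw, hwz, him⟩ => ?_
  have hP : ∏ i, (w - z i) ≠ 0 :=
    prod_ne_zero_iff.2 fun i _ => sub_ne_zero.2 fun h => hwz ⟨i, h.symm⟩
  simpa only [Fintype.card_fin] using
    Complex.pow_card_eq_of_im_mul_prod_sub_eq_zero hw hz (Complex.exp_ne_zero _) hP him
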